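/- arXiv:2208.08567 — 3 statements merged into one kernel-verified Lean document; each statement's English description precedes it below -/
import Mathlib

section
/- Let ū be an H-valued random variable with mean u, ‖u‖ ≤ L, E[‖ū − u‖²] ≤ σ²/m, and let ũ = min{λ/‖ū‖, 1}·ū with λ > L. Then the bias of the clipped estimator satisfies ‖E[ũ] − u‖ ≤ σ²λ / (m(λ−L)²). -/
/-!
Clipping at level `λ` moves `v` by exactly `max (‖v‖ - λ) 0`, and when `‖u‖ ≤ L < λ` this is at
most `‖v - u‖ ^ 2 / (λ - L)`, a deterministic bound. Since `E[ū] = u`, the bias is `E[clip ū - ū]`,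
whose norm is therefore at most `E‖ū - u‖² / (λ - L) ≤ σ² / (m (λ - L)) ≤ σ² λ / (m (λ - L)²)`.
-/

open MeasureTheory

noncomputable def clip {E : Type*} [NormedAddCommGroup E] [NormedSpace ℝ E] (lam : ℝ) (v : E) : E :=
  min (lam / ‖v‖) 1 • v

theorem max_sub_zero_mul_le_sq {a : ℝ} (ha : 0 ≤ a) (r : ℝ) : max (r - a) 0 * a ≤ r ^ 2 := by
  rcases le_total (r - a) 0 with h | h
  · rw [max_eq_right h, zero_mul]
    positivity
  · rw [max_eq_left h]
    nlinarith [sq_nonneg (r - a)]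

section Clip

variable {E : Type*} [NormedAddCommGroup E] [NormedSpace ℝ E]

theorem norm_clip_sub_self {lam : ℝ} (hlam : 0 ≤ lam) (v : E) :
    ‖clip lam v - v‖ = max (‖v‖ - lam) 0 := by
  rcases eq_or_ne v 0 with rfl | hv
  · simp [clip, hlam]
  have hv : 0 < ‖v‖ := norm_pos_iff.mpr hv
  have hsmul : clip lam v - v = (min (lam / ‖v‖) 1 - 1) • v := by rw [clip, sub_smul, one_smul]
  rw [hsmul, norm_smul, Real.norm_eq_abs]
  rcases le_total lam ‖v‖ with h | h
  · have hdiv : lam / ‖v‖ ≤ 1 := div_le_one_of_le₀ h hv.le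
    rw [min_eq_left hdiv, abs_of_nonpos (by linarith), max_eq_left (by linarith)]
    field_simp
    ring
  · rw [min_eq_right ((one_le_div hv).mpr h), max_eq_right (by linarith)]
    simp

theorem norm_clip_sub_self_le {lam L : ℝ} {u : E} (huL : ‖u‖ ≤ L) (hlam : L < lam) (v : E) :
    ‖clip lam v - v‖ ≤ ‖v - u‖ ^ 2 / (lam - L) := by
  have hgap : 0 < lam - L := sub_pos.mpr hlam
  have hshift : ‖v‖ - lam ≤ ‖v - u‖ - (lam - L) := by linarith [norm_sub_norm_le v u]
  rw [norm_clip_sub_self ((norm_nonneg u).trans (huL.trans hlam.le)), le_div_iff₀ hgap]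
  calc max (‖v‖ - lam) 0 * (lam - L) ≤ max (‖v - u‖ - (lam - L)) 0 * (lam - L) := by gcongr
    _ ≤ ‖v - u‖ ^ 2 := max_sub_zero_mul_le_sq hgap.le _

end Clip

theorem clipped_bias_general
    {H : Type*} [NormedAddCommGroup H] [InnerProductSpace ℝ H]
    {Ω : Type*} [MeasurableSpace Ω] (μ : Measure Ω)
    (ubar : Ω → H) (u : H) (L σ m lam : ℝ)
    (hL : 0 ≤ L) (hlam : L < lam)
    (huL : ‖u‖ ≤ L)
    (hintu : Integrable ubar μ)
    (hmean : ∫ ω, ubar ω ∂μ = u)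
    (hintclip : Integrable (fun ω => (min (lam / ‖ubar ω‖) 1) • ubar ω) μ)
    (hint2 : Integrable (fun ω => ‖ubar ω - u‖ ^ 2) μ)
    (hvar : ∫ ω, ‖ubar ω - u‖ ^ 2 ∂μ ≤ σ ^ 2 / m) :
    ‖(∫ ω, (min (lam / ‖ubar ω‖) 1) • ubar ω ∂μ) - u‖ ≤ σ ^ 2 * lam / (m * (lam - L) ^ 2) := by
  change ‖(∫ ω, clip lam (ubar ω) ∂μ) - u‖ ≤ _
  replace hintclip : Integrable (fun ω => clip lam (ubar ω)) μ := hintclip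
  set c := lam / (lam - L) ^ 2 with hc_def
  have hgap : 0 < lam - L := sub_pos.mpr hlam
  have hc : 1 / (lam - L) ≤ c := by
    rw [div_le_div_iff₀ hgap (by positivity)]
    nlinarith
  have hpoint (ω : Ω) : ‖clip lam (ubar ω) - ubar ω‖ ≤ c * ‖ubar ω - u‖ ^ 2 :=
    calc ‖clip lam (ubar ω) - ubar ω‖ ≤ ‖ubar ω - u‖ ^ 2 / (lam - L) :=
          norm_clip_sub_self_le huL hlam _
      _ = 1 / (lam - L) * ‖ubar ω - u‖ ^ 2 := by ring
      _ ≤ c * ‖ubar ω - u‖ ^ 2 := by gcongr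
  calc ‖(∫ ω, clip lam (ubar ω) ∂μ) - u‖ = ‖∫ ω, (clip lam (ubar ω) - ubar ω) ∂μ‖ := by
        rw [integral_sub hintclip hintu, hmean]
    _ ≤ ∫ ω, ‖clip lam (ubar ω) - ubar ω‖ ∂μ := norm_integral_le_integral_norm _
    _ ≤ ∫ ω, c * ‖ubar ω - u‖ ^ 2 ∂μ :=
        integral_mono (hintclip.sub hintu).norm (hint2.const_mul c) hpoint
    _ = c * ∫ ω, ‖ubar ω - u‖ ^ 2 ∂μ := integral_const_mul c _
    _ ≤ c * (σ ^ 2 / m) := mul_le_mul_of_nonneg_left hvar ((one_div_pos.mpr hgap).le.trans hc)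
    _ = σ ^ 2 * lam / (m * (lam - L) ^ 2) := by
        rw [hc_def, div_mul_div_comm, mul_comm lam, mul_comm ((lam - L) ^ 2)]

theorem clipped_bias
    {H : Type*} [NormedAddCommGroup H] [InnerProductSpace ℝ H] [CompleteSpace H]
    {Ω : Type*} [MeasurableSpace Ω] (μ : Measure Ω) [IsProbabilityMeasure μ]
    (ubar : Ω → H) (u : H) (L σ m lam : ℝ)
    (hL : 0 ≤ L) (hσ : 0 < σ) (hm : 0 < m) (hlam : L < lam)
    (huL : ‖u‖ ≤ L)
    (hintu : Integrable ubar μ)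
    (hmean : ∫ ω, ubar ω ∂μ = u)
    (hintclip : Integrable (fun ω => (min (lam / ‖ubar ω‖) 1) • ubar ω) μ)
    (hint2 : Integrable (fun ω => ‖ubar ω - u‖ ^ 2) μ)
    (hvar : ∫ ω, ‖ubar ω - u‖ ^ 2 ∂μ ≤ σ ^ 2 / m) :
    ‖(∫ ω, (min (lam / ‖ubar ω‖) 1) • ubar ω ∂μ) - u‖ ≤ σ ^ 2 * lam / (m * (lam - L) ^ 2) :=
  clipped_bias_general μ ubar u L σ m lam hL hlam huL hintu hmean hintclip hint2 hvar
end

section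
/- Let f: H → ℝ be convex, X ⊂ H closed convex bounded, x ∈ X, γ > 0, and let u ∈ ∂f(x_k) and ũ ∈ H be arbitrary. If x_{k+1} = P_X(x_k − γ ũ) with x_k ∈ X, then 2γ(f(x_k) − f(x)) ≤ ‖x_k − x‖² − ‖x_{k+1} − x‖² + 2γ⟨x − x_k, ũ − u⟩ + γ²‖ũ‖². -/
/-!
A nearest point `p` of a convex set `K` to `z` sees every `y ∈ K` at an obtuse angle from `z`,
so `‖p - y‖ ≤ ‖z - y‖`. Applied to `z = x_k - γ ũ`, `p = x_{k+1}`, `y = x`, this bounds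
`‖x_{k+1} - x‖²` by `‖x_k - x‖² - 2γ⟪x_k - x, ũ⟫ + γ²‖ũ‖²`; the subgradient inequality at `x`
converts `⟪x_k - x, u⟫` into `f x_k - f x`, and the difference of the two inner products is the
error term `⟪x - x_k, ũ - u⟫`.
-/

open scoped RealInnerProductSpace

section Projection

variable {F : Type*} [NormedAddCommGroup F] [InnerProductSpace ℝ F]

theorem real_inner_sub_le_zero_of_forall_norm_sub_le {K : Set F} (hK : Convex ℝ K) {z p y : F}
    (hp : p ∈ K) (hmin : ∀ w ∈ K, ‖z - p‖ ≤ ‖z - w‖) (hy : y ∈ K) :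
    ⟪z - p, y - p⟫ ≤ 0 := by
  have : Nonempty K := ⟨⟨p, hp⟩⟩
  have hinf : ‖z - p‖ = ⨅ w : K, ‖z - w‖ :=
    (le_ciInf fun w : K => hmin w w.2).antisymm
      (ciInf_le (f := fun w : K => ‖z - w‖) ⟨0, by rintro _ ⟨w, rfl⟩; positivity⟩ ⟨p, hp⟩)
  exact (norm_eq_iInf_iff_real_inner_le_zero hK hp).mp hinf y hy

theorem norm_sub_le_of_forall_norm_sub_le {K : Set F} (hK : Convex ℝ K) {z p y : F}
    (hp : p ∈ K) (hmin : ∀ w ∈ K, ‖z - p‖ ≤ ‖z - w‖) (hy : y ∈ K) :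
    ‖p - y‖ ≤ ‖z - y‖ := by
  have hobtuse : 0 ≤ ⟪z - p, p - y⟫ := by
    rw [← neg_sub y p, inner_neg_right, neg_nonneg]
    exact real_inner_sub_le_zero_of_forall_norm_sub_le hK hp hmin hy
  have hsplit : ‖z - y‖ ^ 2 = ‖z - p‖ ^ 2 + 2 * ⟪z - p, p - y⟫ + ‖p - y‖ ^ 2 := by
    rw [← norm_add_sq_real, sub_add_sub_cancel]
  refine (pow_le_pow_iff_left₀ (norm_nonneg _) (norm_nonneg _) two_ne_zero).mp ?_
  nlinarith [sq_nonneg ‖z - p‖]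

theorem norm_sub_smul_sq_real (a v : F) (γ : ℝ) :
    ‖a - γ • v‖ ^ 2 = ‖a‖ ^ 2 - 2 * γ * ⟪a, v⟫ + γ ^ 2 * ‖v‖ ^ 2 := by
  rw [norm_sub_sq_real, real_inner_smul_right, norm_smul, mul_pow, Real.norm_eq_abs, sq_abs]
  ring

end Projection

theorem one_step_subgradient_inequality_general
    {H : Type*} [NormedAddCommGroup H] [InnerProductSpace ℝ H]
    (f : H → ℝ)
    (X : Set H) (hXconvex : Convex ℝ X)
    (x xk xk1 : H) (hx : x ∈ X) (γ : ℝ) (hγ : 0 < γ)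
    (u utld : H)
    (hu : ∀ y, f y ≥ f xk + ⟪y - xk, u⟫)
    (hproj : xk1 ∈ X ∧ ∀ y ∈ X, ‖xk - γ • utld - xk1‖ ≤ ‖xk - γ • utld - y‖) :
    2 * γ * (f xk - f x) ≤
      ‖xk - x‖ ^ 2 - ‖xk1 - x‖ ^ 2 + 2 * γ * ⟪x - xk, utld - u⟫ + γ ^ 2 * ‖utld‖ ^ 2 := by
  have hnonexp : ‖xk1 - x‖ ^ 2 ≤ ‖xk - γ • utld - x‖ ^ 2 := by
    gcongr
    exact norm_sub_le_of_forall_norm_sub_le hXconvex hproj.1 hproj.2 hx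
  have hexpand : ‖xk - γ • utld - x‖ ^ 2 =
      ‖xk - x‖ ^ 2 - 2 * γ * ⟪xk - x, utld⟫ + γ ^ 2 * ‖utld‖ ^ 2 := by
    rw [sub_right_comm, norm_sub_smul_sq_real]
  have hsubgrad : f xk - f x ≤ ⟪xk - x, u⟫ := by
    have := hu x
    rw [← neg_sub xk x, inner_neg_left] at this
    linarith
  have hcross : ⟪x - xk, utld - u⟫ = ⟪xk - x, u⟫ - ⟪xk - x, utld⟫ := by
    rw [← neg_sub xk x, inner_neg_left, inner_sub_right]
    ring
  nlinarith [mul_le_mul_of_nonneg_left hsubgrad (by positivity : (0 : ℝ) ≤ 2 * γ)]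

theorem one_step_subgradient_inequality
    {H : Type*} [NormedAddCommGroup H] [InnerProductSpace ℝ H] [CompleteSpace H]
    (f : H → ℝ) (hf : ConvexOn ℝ Set.univ f)
    (X : Set H) (hXne : X.Nonempty) (hXclosed : IsClosed X) (hXconvex : Convex ℝ X)
    (hXbdd : Bornology.IsBounded X)
    (x xk xk1 : H) (hx : x ∈ X) (hxk : xk ∈ X) (γ : ℝ) (hγ : 0 < γ)
    (u utld : H)
    (hu : ∀ y, f y ≥ f xk + ⟪y - xk, u⟫)
    (hproj : xk1 ∈ X ∧ ∀ y ∈ X, ‖xk - γ • utld - xk1‖ ≤ ‖xk - γ • utld - y‖) :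
    2 * γ * (f xk - f x) ≤
      ‖xk - x‖ ^ 2 - ‖xk1 - x‖ ^ 2 + 2 * γ * ⟪x - xk, utld - u⟫ + γ ^ 2 * ‖utld‖ ^ 2 :=
  one_step_subgradient_inequality_general f X hXconvex x xk xk1 hx γ hγ u utld hu hproj
end

section
/- Let (w_i), (γ_i), (λ_i) be strictly positive with w_i γ_i λ_i² ≤ b_k for all i ≤ k, and suppose (λ_k²/(α_k² b_k²))·Σ_{i=1}^k w_i²γ_i²λ_i² · (σ²/m + L²) ≤ (2/3)β², where λ_k = βα_k + L. Let (ζ_i) be a martingale difference sequence with |ζ_i| ≤ 2b_k a.s. and conditional variances σ_i² ≤ w_i²γ_i²λ_i²(σ²/m + L²). Then for δ ∈ (0, 2/e], P( Σ_{i=1}^k ζ_i > 2b_k·log(2/δ) ) ≤ δ/2. -/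
/-!
Chernoff's method for martingales. For `|y| ≤ 3/2` one has `exp y ≤ 1 + y + (4/3) y²`, so a
martingale difference `ζ` with `|ζ| ≤ c` and conditional variance at most `v` has conditional
moment generating function at most `exp ((4/3) t² v)` at `t = 3 / (2c)`. Peeling off one increment
at a time with the tower property bounds the moment generating function of the partial sum by
`exp ((4/3) t² ∑ v)`, and Markov's inequality gives `P(∑ ζ > c ℓ) ≤ exp (-ℓ)` as soon as
`∑ v ≤ c² ℓ / 6`. With `c = 2 b` and `ℓ = log (2/δ) ≥ 1` this variance budget follows from the
hypothesis on the weights because `λ_k ≥ β α_k`.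
-/

open MeasureTheory ProbabilityTheory

lemma Real.exp_le_one_add_add_four_thirds_mul_sq {y : ℝ} (hy : |y| ≤ 3 / 2) :
    Real.exp y ≤ 1 + y + 4 / 3 * y ^ 2 := by
  obtain ⟨hlo, hhi⟩ := abs_le.mp hy
  have hhalf : Real.exp (y / 2) ≤ 1 + y / 2 + (y / 2) ^ 2 := by
    have := Real.abs_exp_sub_one_sub_id_le (x := y / 2) (by rw [abs_le]; constructor <;> linarith)
    linarith [le_abs_self (Real.exp (y / 2) - 1 - y / 2)]
  have hcoeff : 0 ≤ 7 / 12 - y / 4 - y ^ 2 / 16 := by nlinarith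
  calc Real.exp y = Real.exp (y / 2) ^ 2 := by rw [← Real.exp_nat_mul]; ring_nf
    _ ≤ (1 + y / 2 + (y / 2) ^ 2) ^ 2 := pow_le_pow_left₀ (Real.exp_pos _).le hhalf 2
    _ ≤ 1 + y + 4 / 3 * y ^ 2 := by nlinarith [mul_nonneg (sq_nonneg y) hcoeff]

lemma le_mul_sq_of_sq_add_div_mul_le {β a L b X r : ℝ} (hβ : 0 < β) (ha : 0 < a) (hL : 0 ≤ L)
    (hb : b ≠ 0) (hr : 0 ≤ r) (h : (β * a + L) ^ 2 / (a ^ 2 * b ^ 2) * X ≤ r * β ^ 2) :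
    X ≤ r * b ^ 2 := by
  rw [div_mul_eq_mul_div, div_le_iff₀ (by positivity)] at h
  by_contra! hX
  have hX0 : 0 < X := lt_of_le_of_lt (by positivity) hX
  have hβa : (β * a) ^ 2 ≤ (β * a + L) ^ 2 := pow_le_pow_left₀ (by positivity) (by linarith) 2
  nlinarith [mul_le_mul_of_nonneg_right hβa hX0.le,
    mul_lt_mul_of_pos_left hX (by positivity : 0 < (β * a) ^ 2)]

section

variable {Ω : Type*} {m m0 : MeasurableSpace Ω} {μ : Measure Ω}

lemma integrable_exp_mul_of_abs_le [IsFiniteMeasure μ] {f : Ω → ℝ} {C : ℝ}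
    (hf : AEStronglyMeasurable f μ) (hfC : ∀ᵐ ω ∂μ, |f ω| ≤ C) (t : ℝ) :
    Integrable (fun ω => Real.exp (t * f ω)) μ := by
  refine .of_bound (Real.continuous_exp.comp_aestronglyMeasurable (hf.const_mul t))
    (Real.exp (|t| * C)) ?_
  filter_upwards [hfC] with ω hω
  rw [Real.norm_eq_abs, Real.abs_exp, Real.exp_le_exp]
  calc t * f ω ≤ |t| * |f ω| := by rw [← abs_mul]; exact le_abs_self _
    _ ≤ |t| * C := mul_le_mul_of_nonneg_left hω (abs_nonneg t)

lemma integrable_exp_mul_sum_of_abs_le [IsFiniteMeasure μ] {ι : Type*} {f : ι → Ω → ℝ} {C : ℝ}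
    (hf : ∀ i, AEStronglyMeasurable (f i) μ) (hfC : ∀ i, ∀ᵐ ω ∂μ, |f i ω| ≤ C)
    (s : Finset ι) (t : ℝ) :
    Integrable (fun ω => Real.exp (t * ∑ i ∈ s, f i ω)) μ := by
  refine integrable_exp_mul_of_abs_le (Finset.aestronglyMeasurable_fun_sum _ fun i _ => hf i)
    (C := s.card * C) ?_ t
  filter_upwards [ae_all_iff.mpr fun i : s => hfC i] with ω hω
  calc _ ≤ ∑ i ∈ s, |f i ω| := Finset.abs_sum_le_sum_abs _ _
    _ ≤ ∑ i ∈ s, C := Finset.sum_le_sum fun i hi => hω ⟨i, hi⟩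
    _ = s.card * C := by simp

lemma condExp_exp_mul_le [IsFiniteMeasure μ] (hm : m ≤ m0) {X : Ω → ℝ} {c t v : ℝ}
    (hX : AEStronglyMeasurable X μ) (hXc : ∀ᵐ ω ∂μ, |X ω| ≤ c) (hmean : μ[X|m] =ᵐ[μ] 0)
    (hvar : ∀ᵐ ω ∂μ, μ[fun ω => X ω ^ 2|m] ω ≤ v) (ht : 0 ≤ t) (htc : t * c ≤ 3 / 2) :
    ∀ᵐ ω ∂μ, μ[fun ω => Real.exp (t * X ω)|m] ω ≤ Real.exp (4 / 3 * t ^ 2 * v) := by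
  set a : ℝ := 4 / 3 * t ^ 2
  have hXint : Integrable X μ := .of_bound hX c (by simpa only [Real.norm_eq_abs] using hXc)
  have hXsq : Integrable (fun ω => X ω ^ 2) μ :=
    .of_bound (hX.pow 2) (c ^ 2) (by
      filter_upwards [hXc] with ω hω
      rw [Real.norm_eq_abs, abs_pow]
      exact pow_le_pow_left₀ (abs_nonneg _) hω 2)
  have hlin : Integrable ((fun _ => (1 : ℝ)) + t • X) μ := (integrable_const 1).add (hXint.smul t)
  have hquad : Integrable (a • fun ω => X ω ^ 2) μ := hXsq.smul a
  have hexp_le :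
      (fun ω => Real.exp (t * X ω)) ≤ᵐ[μ] (fun _ => (1 : ℝ)) + t • X + a • fun ω => X ω ^ 2 := by
    filter_upwards [hXc] with ω hω
    have : |t * X ω| ≤ 3 / 2 := by
      rw [abs_mul, abs_of_nonneg ht]; exact (mul_le_mul_of_nonneg_left hω ht).trans htc
    simpa [mul_pow, a, mul_assoc] using Real.exp_le_one_add_add_four_thirds_mul_sq this
  have hsplit : μ[(fun _ => (1 : ℝ)) + t • X + a • fun ω => X ω ^ 2|m]
      =ᵐ[μ] (fun _ => (1 : ℝ)) + t • μ[X|m] + a • μ[fun ω => X ω ^ 2|m] := by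
    filter_upwards [condExp_add hlin hquad m, condExp_add (integrable_const 1) (hXint.smul t) m,
      condExp_smul t X m, condExp_smul a (fun ω => X ω ^ 2) m] with ω h1 h2 h3 h4
    simp only [Pi.add_apply] at h1 h2 ⊢
    rw [h1, h2, h3, h4, condExp_const hm]
  filter_upwards [condExp_mono (integrable_exp_mul_of_abs_le hX hXc t) (hlin.add hquad) hexp_le,
    hsplit, hmean, hvar] with ω hmono hω hmeanω hvarω
  rw [hω] at hmono
  simp only [Pi.add_apply, Pi.smul_apply, smul_eq_mul, hmeanω, Pi.zero_apply, mul_zero,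
    add_zero] at hmono
  calc _ ≤ 1 + a * μ[fun ω => X ω ^ 2|m] ω := hmono
    _ ≤ a * v + 1 := by linarith [mul_le_mul_of_nonneg_left hvarω (by positivity : 0 ≤ a)]
    _ ≤ Real.exp (a * v) := Real.add_one_le_exp _

variable [IsProbabilityMeasure μ] {ℱ : Filtration ℕ m0} {ζ : ℕ → Ω → ℝ}

lemma integral_exp_mul_sum_Icc_le {c t : ℝ} {φ : ℕ → ℝ} (hadapted : StronglyAdapted ℱ ζ)
    (hbdd : ∀ i, ∀ᵐ ω ∂μ, |ζ i ω| ≤ c)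
    (hstep : ∀ i, ∀ᵐ ω ∂μ, μ[fun ω => Real.exp (t * ζ (i + 1) ω)|ℱ i] ω ≤ Real.exp (φ (i + 1)))
    (n : ℕ) :
    ∫ ω, Real.exp (t * ∑ i ∈ Finset.Icc 1 n, ζ i ω) ∂μ ≤ Real.exp (∑ i ∈ Finset.Icc 1 n, φ i) := by
  have hζ : ∀ i, AEStronglyMeasurable (ζ i) μ :=
    fun i => ((hadapted i).mono (ℱ.le i)).aestronglyMeasurable
  induction n with
  | zero => simp
  | succ n ih =>
    set f : Ω → ℝ := fun ω => Real.exp (t * ∑ i ∈ Finset.Icc 1 n, ζ i ω)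
    set g : Ω → ℝ := fun ω => Real.exp (t * ζ (n + 1) ω)
    have hfg : (fun ω => Real.exp (t * ∑ i ∈ Finset.Icc 1 (n + 1), ζ i ω)) = f * g := by
      ext ω
      simp only [f, g, Pi.mul_apply, Finset.sum_Icc_succ_top (Nat.le_add_left 1 n), mul_add,
        Real.exp_add]
    have hf_meas : StronglyMeasurable[ℱ n] f :=
      Real.continuous_exp.comp_stronglyMeasurable ((Finset.stronglyMeasurable_fun_sum _
        fun i hi => (hadapted i).mono (ℱ.mono (Finset.mem_Icc.1 hi).2)).const_mul t)
    have hpull : μ[f * g|ℱ n] =ᵐ[μ] f * μ[g|ℱ n] := by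
      refine condExp_mul_of_stronglyMeasurable_left hf_meas ?_
        (integrable_exp_mul_of_abs_le (hζ (n + 1)) (hbdd (n + 1)) t)
      rw [← hfg]
      exact integrable_exp_mul_sum_of_abs_le hζ hbdd _ t
    calc ∫ ω, Real.exp (t * ∑ i ∈ Finset.Icc 1 (n + 1), ζ i ω) ∂μ
        = ∫ ω, μ[f * g|ℱ n] ω ∂μ := by rw [hfg, integral_condExp (ℱ.le n)]
      _ = ∫ ω, f ω * μ[g|ℱ n] ω ∂μ := integral_congr_ae hpull
      _ ≤ ∫ ω, f ω * Real.exp (φ (n + 1)) ∂μ := by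
        refine integral_mono_ae (integrable_condExp.congr hpull)
          ((integrable_exp_mul_sum_of_abs_le hζ hbdd _ t).mul_const _) ?_
        filter_upwards [hstep n] with ω hω
        exact mul_le_mul_of_nonneg_left hω (Real.exp_pos _).le
      _ = (∫ ω, f ω ∂μ) * Real.exp (φ (n + 1)) := integral_mul_const _ _
      _ ≤ Real.exp (∑ i ∈ Finset.Icc 1 n, φ i) * Real.exp (φ (n + 1)) :=
        mul_le_mul_of_nonneg_right ih (Real.exp_pos _).le
      _ = Real.exp (∑ i ∈ Finset.Icc 1 (n + 1), φ i) := by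
        rw [Finset.sum_Icc_succ_top (Nat.le_add_left 1 n), Real.exp_add]

theorem measureReal_sum_Icc_gt_le_exp_neg {c ℓ : ℝ} {v : ℕ → ℝ} (n : ℕ) (hc : 0 < c)
    (hadapted : StronglyAdapted ℱ ζ) (hmdiff : ∀ i, μ[ζ (i + 1)|ℱ i] =ᵐ[μ] 0)
    (hbdd : ∀ i, ∀ᵐ ω ∂μ, |ζ i ω| ≤ c)
    (hvar : ∀ i, ∀ᵐ ω ∂μ, μ[fun ω => ζ (i + 1) ω ^ 2|ℱ i] ω ≤ v (i + 1))
    (hsum : ∑ i ∈ Finset.Icc 1 n, v i ≤ c ^ 2 * ℓ / 6) :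
    μ.real {ω | c * ℓ < ∑ i ∈ Finset.Icc 1 n, ζ i ω} ≤ Real.exp (-ℓ) := by
  set t : ℝ := 3 / (2 * c)
  have ht : 0 ≤ t := by positivity
  have htc : t * c = 3 / 2 := by
    rw [div_mul_eq_mul_div, div_eq_iff (by positivity)]; ring
  have hζ : ∀ i, AEStronglyMeasurable (ζ i) μ :=
    fun i => ((hadapted i).mono (ℱ.le i)).aestronglyMeasurable
  have hmgf : mgf (fun ω => ∑ i ∈ Finset.Icc 1 n, ζ i ω) μ t
      ≤ Real.exp (∑ i ∈ Finset.Icc 1 n, 4 / 3 * t ^ 2 * v i) :=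
    integral_exp_mul_sum_Icc_le hadapted hbdd
      (fun i => condExp_exp_mul_le (ℱ.le i) (hζ (i + 1)) (hbdd (i + 1)) (hmdiff i) (hvar i)
        ht htc.le) n
  have hexponent : -t * (c * ℓ) + ∑ i ∈ Finset.Icc 1 n, 4 / 3 * t ^ 2 * v i ≤ -ℓ := by
    have hdecay : -t * (c * ℓ) = -(3 / 2) * ℓ := by rw [← htc]; ring
    have hvariance : 4 / 3 * t ^ 2 * (c ^ 2 * ℓ / 6) = ℓ / 2 := by
      rw [show 4 / 3 * t ^ 2 * (c ^ 2 * ℓ / 6) = 2 / 9 * (t * c) ^ 2 * ℓ by ring, htc]; ring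
    rw [← Finset.mul_sum]
    linarith [mul_le_mul_of_nonneg_left hsum (by positivity : 0 ≤ 4 / 3 * t ^ 2)]
  calc μ.real {ω | c * ℓ < ∑ i ∈ Finset.Icc 1 n, ζ i ω}
      ≤ μ.real {ω | c * ℓ ≤ ∑ i ∈ Finset.Icc 1 n, ζ i ω} :=
        measureReal_mono (Set.ofPred_subset_ofPred.2 fun _ => le_of_lt)
    _ ≤ Real.exp (-t * (c * ℓ)) * mgf (fun ω => ∑ i ∈ Finset.Icc 1 n, ζ i ω) μ t :=
      measure_ge_le_exp_mul_mgf _ ht (integrable_exp_mul_sum_of_abs_le hζ hbdd _ t)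
    _ ≤ Real.exp (-t * (c * ℓ)) * Real.exp (∑ i ∈ Finset.Icc 1 n, 4 / 3 * t ^ 2 * v i) := by
      gcongr
    _ ≤ Real.exp (-ℓ) := by rw [← Real.exp_add, Real.exp_le_exp]; exact hexponent

end

theorem analysis_term_C_general
    {Ω : Type*} {m0 : MeasurableSpace Ω} {μ : Measure Ω} [IsProbabilityMeasure μ]
    (ℱ : Filtration ℕ m0) (ζ : ℕ → Ω → ℝ)
    (β σ L m : ℝ) (hβ : 0 < β) (hL : 0 < L)
    (w γ α lam : ℕ → ℝ) (b : ℝ) (hb : 0 < b)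
    (hα : ∀ i, 0 < α i)
    (hlam : ∀ i, lam i = β * α i + L)
    (k : ℕ)
    (hvarsum : (lam k ^ 2 / (α k ^ 2 * b ^ 2)) *
        (∑ i ∈ Finset.Icc 1 k, w i ^ 2 * γ i ^ 2 * lam i ^ 2) * (σ ^ 2 / m + L ^ 2)
      ≤ (2 / 3) * β ^ 2)
    (hadapted : ∀ i, StronglyMeasurable[ℱ i] (ζ i))
    (hmdiff : ∀ i, μ[ζ (i + 1)|ℱ i] =ᵐ[μ] 0)
    (hbdd : ∀ i, ∀ᵐ ω ∂μ, |ζ i ω| ≤ 2 * b)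
    (hcondvar : ∀ i, ∀ᵐ ω ∂μ,
      condExp (ℱ (i - 1)) μ (fun ω' => (ζ i ω') ^ 2) ω
        ≤ w i ^ 2 * γ i ^ 2 * lam i ^ 2 * (σ ^ 2 / m + L ^ 2))
    (δ : ℝ) (hδ : 0 < δ) (hδ' : δ ≤ 2 / Real.exp 1) :
    (μ {ω | (∑ i ∈ Finset.Icc 1 k, ζ i ω) > 2 * b * Real.log (2 / δ)}).toReal ≤ δ / 2 := by
  set ℓ := Real.log (2 / δ)
  have hℓ : 1 ≤ ℓ := by
    rw [Real.le_log_iff_exp_le (by positivity), le_div_iff₀ hδ]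
    rw [le_div_iff₀ (Real.exp_pos 1)] at hδ'
    linarith
  have hbudget : ∑ i ∈ Finset.Icc 1 k, w i ^ 2 * γ i ^ 2 * lam i ^ 2 * (σ ^ 2 / m + L ^ 2)
      ≤ (2 * b) ^ 2 * ℓ / 6 := by
    rw [← Finset.sum_mul]
    rw [mul_assoc, hlam k] at hvarsum
    have hsum := le_mul_sq_of_sq_add_div_mul_le hβ (hα k) hL.le hb.ne' (by norm_num) hvarsum
    nlinarith [sq_nonneg b]
  have hexp : Real.exp (-ℓ) = δ / 2 := by
    rw [Real.exp_neg, Real.exp_log (by positivity), inv_div]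
  rw [← hexp]
  exact measureReal_sum_Icc_gt_le_exp_neg k (by positivity) hadapted hmdiff hbdd
    (fun i => by simpa using hcondvar (i + 1)) hbudget

theorem analysis_term_C
    {Ω : Type*} {m0 : MeasurableSpace Ω} {μ : Measure Ω} [IsProbabilityMeasure μ]
    (ℱ : Filtration ℕ m0) (ζ : ℕ → Ω → ℝ)
    (β σ L m : ℝ) (hβ : 0 < β) (hσ : 0 < σ) (hL : 0 < L) (hm : 0 < m)
    (w γ α lam : ℕ → ℝ) (b : ℝ) (hb : 0 < b)
    (hw : ∀ i, 0 < w i) (hγ : ∀ i, 0 < γ i) (hα : ∀ i, 0 < α i)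
    (hlam : ∀ i, lam i = β * α i + L)
    (k : ℕ) (hk : 1 ≤ k)
    (hbk : ∀ i ∈ Finset.Icc 1 k, w i * γ i * lam i ^ 2 ≤ b)
    (hvarsum : (lam k ^ 2 / (α k ^ 2 * b ^ 2)) *
        (∑ i ∈ Finset.Icc 1 k, w i ^ 2 * γ i ^ 2 * lam i ^ 2) * (σ ^ 2 / m + L ^ 2)
      ≤ (2 / 3) * β ^ 2)
    (hadapted : ∀ i, StronglyMeasurable[ℱ i] (ζ i))
    (hint : ∀ i, Integrable (ζ i) μ)
    (hmdiff : ∀ i, μ[ζ (i + 1)|ℱ i] =ᵐ[μ] 0)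
    (hbdd : ∀ i, ∀ᵐ ω ∂μ, |ζ i ω| ≤ 2 * b)
    (hcondvar : ∀ i, ∀ᵐ ω ∂μ,
      condExp (ℱ (i - 1)) μ (fun ω' => (ζ i ω') ^ 2) ω
        ≤ w i ^ 2 * γ i ^ 2 * lam i ^ 2 * (σ ^ 2 / m + L ^ 2))
    (δ : ℝ) (hδ : 0 < δ) (hδ' : δ ≤ 2 / Real.exp 1) :
    (μ {ω | (∑ i ∈ Finset.Icc 1 k, ζ i ω) > 2 * b * Real.log (2 / δ)}).toReal ≤ δ / 2 :=
  analysis_term_C_general ℱ ζ β σ L m hβ hL w γ α lam b hb hα hlam k hvarsum hadapted hmdiff hbdd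
    hcondvar δ hδ hδ'
end
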